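/- arXiv:2502.00259 — 5 statements merged into one kernel-verified Lean document; each statement's English description precedes it below -/
import Mathlib

section
/- Let $f : A \to B$ be a homomorphism of commutative rings and let $Q \in B[t]$ be a polynomial whose constant coefficient $Q(0)$ is nilpotent and lies in the image of $f$. Let $\varphi : A[t] \to B[t]/(Q)$ be the ring homomorphism extending $f$ with $\varphi(t) = \bar{t}$. Then $\varphi$ is surjective if and only if $f$ is surjective. -/
open Polynomial

/-- the map `A[t] → B[t]/(Q)` extending `f` (and sending `t` to `t̄`)
is surjective iff `f` is, when `Q(0)` is nilpotent and in the image of `f`. -/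
theorem stmt_4 {A B : Type*} [CommRing A] [CommRing B] (f : A →+* B)
    (Q : Polynomial B) (h1 : IsNilpotent (Q.coeff 0)) (h2 : Q.coeff 0 ∈ Set.range f) :
    Function.Surjective
      ((Ideal.Quotient.mk (Ideal.span {Q})).comp (Polynomial.mapRingHom f)) ↔
    Function.Surjective f := by
  obtain ⟨a₀, ha₀⟩ := h2
  obtain ⟨n, hn⟩ := h1
  constructor
  · intro hs b
    have key : ∀ b : B, ∃ a r, b = f a + Q.coeff 0 * r := by
      intro b
      obtain ⟨P, hP⟩ := hs (Ideal.Quotient.mk _ (C b))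
      have hmem : P.map f - C b ∈ Ideal.span {Q} := Ideal.Quotient.eq.mp hP
      obtain ⟨R, hR⟩ := Ideal.mem_span_singleton'.mp hmem
      have hc := congrArg (fun p => Polynomial.coeff p 0) hR
      simp only [coeff_mul_C, coeff_sub, coeff_map, coeff_C_zero, mul_coeff_zero] at hc
      refine ⟨P.coeff 0, -(R.coeff 0), ?_⟩
      linear_combination hc
    have step : ∀ k : ℕ, ∃ a r, b = f a + (Q.coeff 0) ^ k * r := by
      intro k
      induction k with
      | zero => exact ⟨0, b, by simp⟩
      | succ m ih =>
        obtain ⟨a, r, hr⟩ := ih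
        obtain ⟨a', r', hr'⟩ := key r
        refine ⟨a + a₀ ^ m * a', r', ?_⟩
        rw [hr, hr']
        rw [map_add, map_mul, map_pow, ha₀]
        ring
    obtain ⟨a, r, hr⟩ := step n
    exact ⟨a, by rw [hr, hn, zero_mul, add_zero]⟩
  · intro hf
    exact (Ideal.Quotient.mk_surjective).comp (Polynomial.map_surjective f hf)
end

section
/- Let $f : A \to B$ be a homomorphism of commutative rings and let $Q \in B[t]$ have nilpotent constant coefficient $Q(0)$ lying in the image of $f$. If $B[t]/(Q)$ is generated as an algebra over the image of the induced map $A[t] \to B[t]/(Q)$ by finitely many elements, then $B$ is a finitely generated algebra over the image of $f$. -/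
open Polynomial

/-- algebra-finiteness transfer. If `B[t]/(Q)` is generated as a ring by
finitely many elements over the image of the induced map `A[t] → B[t]/(Q)`, then `B`
is generated as a ring by finitely many elements over the image of `f`. -/
theorem stmt_5 {A B : Type*} [CommRing A] [CommRing B] (f : A →+* B)
    (Q : Polynomial B) (h1 : IsNilpotent (Q.coeff 0)) (h2 : Q.coeff 0 ∈ Set.range f)
    (hfin : ∃ s : Finset (Polynomial B ⧸ Ideal.span {Q}),
      Subring.closure
        (Set.range ((Ideal.Quotient.mk (Ideal.span {Q})).comp (Polynomial.mapRingHom f))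
          ∪ ↑s) = ⊤) :
    ∃ t : Finset B, Subring.closure (Set.range f ∪ ↑t) = ⊤ := by
  classical
  obtain ⟨s, hs⟩ := hfin
  obtain ⟨n, hn⟩ := h1
  set q0 := Q.coeff 0 with hq0
  set mk := Ideal.Quotient.mk (Ideal.span {Q}) with hmkdef
  have hsurj : Function.Surjective mk := Ideal.Quotient.mk_surjective
  set p : (Polynomial B ⧸ Ideal.span {Q}) → Polynomial B := Function.surjInv hsurj with hp
  have hpspec : ∀ y, mk (p y) = y := fun y => Function.surjInv_eq hsurj y
  refine ⟨s.image (fun y => (p y).coeff 0), ?_⟩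
  set C := Subring.closure (Set.range f ∪ ↑(s.image fun y => (p y).coeff 0)) with hC
  have hq0C : q0 ∈ C := Subring.subset_closure (Or.inl h2)
  have key : ∀ b : B, ∃ c ∈ C, ∃ r : B, b = c + r * q0 := by
    intro b
    have hsub : Subring.closure (Set.range (mk.comp (Polynomial.mapRingHom f)) ∪ ↑s)
        ≤ Subring.map mk (C.comap (Polynomial.evalRingHom 0 : Polynomial B →+* B)) := by
      apply Subring.closure_le.2
      rintro y (⟨a, rfl⟩ | hy)
      · refine ⟨Polynomial.map f a, ?_, rfl⟩
        show (Polynomial.evalRingHom (0 : B)) (Polynomial.map f a) ∈ C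
        have h0 : (Polynomial.evalRingHom (0 : B)) (Polynomial.map f a) = f (a.eval 0) := by
          simp [Polynomial.eval_zero_map]
        rw [h0]
        exact Subring.subset_closure (Or.inl ⟨_, rfl⟩)
      · refine ⟨p y, ?_, hpspec y⟩
        show (Polynomial.evalRingHom (0 : B)) (p y) ∈ C
        have h0 : (Polynomial.evalRingHom (0 : B)) (p y) = (p y).coeff 0 := by
          simp [Polynomial.coeff_zero_eq_eval_zero]
        rw [h0]
        exact Subring.subset_closure (Or.inr (Finset.mem_coe.2
          (Finset.mem_image_of_mem _ hy)))
    have hmem : mk (Polynomial.C b) ∈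
        Subring.map mk (C.comap (Polynomial.evalRingHom 0 : Polynomial B →+* B)) := by
      apply hsub
      rw [hs]
      trivial
    obtain ⟨g, hgC, hg⟩ := hmem
    have hsubmem : Polynomial.C b - g ∈ Ideal.span {Q} :=
      (Ideal.Quotient.eq).1 hg.symm
    obtain ⟨R, hR⟩ := Ideal.mem_span_singleton.1 hsubmem
    have heval := congrArg (Polynomial.eval 0) hR
    simp only [Polynomial.eval_sub, Polynomial.eval_C, Polynomial.eval_mul] at heval
    refine ⟨g.eval 0, hgC, R.eval 0, ?_⟩
    rw [← Polynomial.coeff_zero_eq_eval_zero Q] at heval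
    linear_combination heval
  have key2 : ∀ k : ℕ, ∀ b : B, ∃ c ∈ C, ∃ r : B, b = c + r * q0 ^ k := by
    intro k
    induction k with
    | zero => intro b; exact ⟨0, C.zero_mem, b, by ring⟩
    | succ k ih =>
      intro b
      obtain ⟨c, hc, r, rfl⟩ := ih b
      obtain ⟨c', hc', r', rfl⟩ := key r
      exact ⟨c + c' * q0 ^ k, C.add_mem hc (C.mul_mem hc' (C.pow_mem hq0C k)), r', by ring⟩
  rw [eq_top_iff]
  intro b _
  obtain ⟨c, hc, r, hb⟩ := key2 n b
  rw [hn, mul_zero, add_zero] at hb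
  exact hb ▸ hc
end

section
/- Let $f : A \to B$ be a homomorphism of commutative rings and let $Q \in B[t]$ have nilpotent constant coefficient $Q(0)$ lying in the image of $f$. If $B[t]/(Q)$ is finitely generated as a module over the image of the induced ring map $A[t] \to B[t]/(Q)$, then $B$ is finitely generated as a module over the image of $f$. -/
open Polynomial

/-- module-finiteness transfer. If `B[t]/(Q)` is spanned as a module over
the image of the induced map `A[t] → B[t]/(Q)` by finitely many elements, then `B` is
spanned as a module over the image of `f` by finitely many elements. -/
theorem stmt_6 {A B : Type*} [CommRing A] [CommRing B] (f : A →+* B)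
    (Q : Polynomial B) (h1 : IsNilpotent (Q.coeff 0)) (h2 : Q.coeff 0 ∈ Set.range f)
    (hfin : ∃ (n : ℕ) (g : Fin n → Polynomial B ⧸ Ideal.span {Q}),
      ∀ x : Polynomial B ⧸ Ideal.span {Q}, ∃ a : Fin n → Polynomial A,
        x = ∑ i, ((Ideal.Quotient.mk (Ideal.span {Q})).comp (Polynomial.mapRingHom f))
              (a i) * g i) :
    ∃ (m : ℕ) (g : Fin m → B), ∀ y : B, ∃ a : Fin m → A, y = ∑ i, f (a i) * g i := by
  obtain ⟨n, g, hg⟩ := hfin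
  obtain ⟨a0, ha0⟩ := h2
  obtain ⟨k, hk⟩ := h1
  set c : B := Q.coeff 0 with hc
  have hQmem : ∀ p ∈ Ideal.span {Q}, ((Ideal.Quotient.mk (Ideal.span {c})).comp
      (evalRingHom (0:B))) p = 0 := by
    intro p hp
    rw [Ideal.mem_span_singleton] at hp
    obtain ⟨r, rfl⟩ := hp
    simp only [RingHom.comp_apply, coe_evalRingHom, eval_mul,
      Ideal.Quotient.eq_zero_iff_mem, Ideal.mem_span_singleton]
    exact dvd_mul_of_dvd_left (by rw [hc, coeff_zero_eq_eval_zero]) _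
  let φ : Polynomial B ⧸ Ideal.span {Q} →+* B ⧸ Ideal.span {c} :=
    Ideal.Quotient.lift _ _ hQmem
  choose G hG using fun i => Ideal.Quotient.mk_surjective (φ (g i))
  have hφa : ∀ p : Polynomial A,
      φ (((Ideal.Quotient.mk (Ideal.span {Q})).comp (mapRingHom f)) p)
        = Ideal.Quotient.mk _ (f (p.coeff 0)) := by
    intro p
    simp [φ, eval_map, eval₂_at_zero]
  have step : ∀ y : B, ∃ (a : Fin n → A) (y' : B),
      y = ∑ i, f (a i) * G i + c * y' := by
    intro y
    obtain ⟨a, ha⟩ := hg (Ideal.Quotient.mk _ (C y))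
    have h2 := congrArg φ ha
    have hφC : φ (Ideal.Quotient.mk _ (C y)) = Ideal.Quotient.mk _ y := by
      simp [φ]
    rw [hφC, map_sum] at h2
    simp only [map_mul, hφa, ← hG] at h2
    have h3 : Ideal.Quotient.mk (Ideal.span {c}) (y - ∑ i, f ((a i).coeff 0) * G i) = 0 := by
      rw [map_sub, h2, map_sum]
      simp
    rw [Ideal.Quotient.eq_zero_iff_mem, Ideal.mem_span_singleton] at h3
    obtain ⟨y', hy'⟩ := h3
    refine ⟨fun i => (a i).coeff 0, y', ?_⟩
    rw [← hy']; ring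
  have main : ∀ j, ∀ y : B, ∃ (a : Fin n → A) (y' : B),
      y = ∑ i, f (a i) * G i + c ^ j * y' := by
    intro j
    induction j with
    | zero => intro y; exact ⟨0, y, by simp⟩
    | succ j ih =>
      intro y
      obtain ⟨a, y', hy⟩ := ih y
      obtain ⟨b, y'', hy'⟩ := step y'
      refine ⟨fun i => a i + a0 ^ j * b i, y'', ?_⟩
      rw [hy, hy']
      simp only [map_add, map_mul, map_pow, ha0, add_mul]
      rw [Finset.sum_add_distrib, mul_add, ← mul_assoc, ← pow_succ]
      rw [Finset.mul_sum]
      ring_nf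
  refine ⟨n, G, fun y => ?_⟩
  obtain ⟨a, y', h⟩ := main k y
  exact ⟨a, by simp [h, hk]⟩
end

section
/- Fix an integer $b \geq 1$. For $n_1, n_2 \in \{0, 1, \ldots, b-1\}$ define $\delta(n_1, n_2) = 1$ if $n_1 > 0$, $n_2 > 0$, and $n_1 + n_2 \leq b$, and $\delta(n_1, n_2) = 0$ otherwise. Then for all $n_1, n_2, n_3 \in \{0, \ldots, b-1\}$ we have $\delta(n_1, n_2) + \delta((n_1 + n_2) \bmod b,\ n_3) = \delta(n_2, n_3) + \delta(n_1,\ (n_2 + n_3) \bmod b)$. -/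
/-- The exponent of `(-t)` in the stringy product `e_{ζ^{n₁}} ⋆ e_{ζ^{n₂}}`. -/
def rootDelta (b n1 n2 : ℕ) : ℕ :=
  if 0 < n1 ∧ 0 < n2 ∧ n1 + n2 ≤ b then 1 else 0

/-- the cocycle identity for `rootDelta`. -/
theorem stmt_8 (b : ℕ) (hb : 1 ≤ b) (n1 n2 n3 : ℕ)
    (h1 : n1 < b) (h2 : n2 < b) (h3 : n3 < b) :
    rootDelta b n1 n2 + rootDelta b ((n1 + n2) % b) n3 =
      rootDelta b n2 n3 + rootDelta b n1 ((n2 + n3) % b) := by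
  have e12 : (n1 + n2) % b = if n1 + n2 < b then n1 + n2 else n1 + n2 - b := by
    split_ifs with h
    · exact Nat.mod_eq_of_lt h
    · rw [Nat.mod_eq_sub_mod (by omega), Nat.mod_eq_of_lt (by omega)]
  have e23 : (n2 + n3) % b = if n2 + n3 < b then n2 + n3 else n2 + n3 - b := by
    split_ifs with h
    · exact Nat.mod_eq_of_lt h
    · rw [Nat.mod_eq_sub_mod (by omega), Nat.mod_eq_of_lt (by omega)]
  simp only [rootDelta, e12, e23]
  split_ifs <;> omega
end

section
/- Fix an integer $b \geq 1$ and a commutative ring $R$. Let $M$ be the free $R[t]$-module with basis $e_0, e_1, \ldots, e_{b-1}$ indexed by $\mathbb{Z}/b\mathbb{Z}$. Define an $R[t]$-bilinear product on $M$ by $e_{n_1} \star e_{n_2} = (-t)\, e_{(n_1+n_2) \bmod b}$ if $n_1 > 0$, $n_2 > 0$ and $n_1 + n_2 \leq b$, and $e_{n_1} \star e_{n_2} = e_{(n_1+n_2) \bmod b}$ otherwise (representatives taken in $\{0,\ldots,b-1\}$). Then $\star$ makes $M$ into a commutative associative $R[t]$-algebra with unit $e_0$. -/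
open Polynomial

/-- The coefficient `(-t)^{δ}` of the stringy product on basis elements:
`-X` if `n₁ > 0`, `n₂ > 0` and `n₁ + n₂ ≤ b`, and `1` otherwise
(representatives taken in `{0,…,b-1}`). -/
noncomputable def rootCoeff (b : ℕ) [NeZero b] (R : Type*) [CommRing R] (n1 n2 : ZMod b) :
    Polynomial R :=
  if 0 < n1.val ∧ 0 < n2.val ∧ n1.val + n2.val ≤ b then -Polynomial.X else 1

/-- The `R[t]`-bilinear extension of the stringy product to the free `R[t]`-module
with basis indexed by `ℤ/bℤ` (realized as functions `ZMod b → R[t]`). -/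
noncomputable def rootStar (b : ℕ) [NeZero b] (R : Type*) [CommRing R]
    (f g : ZMod b → Polynomial R) : ZMod b → Polynomial R :=
  fun k => ∑ n1 : ZMod b, ∑ n2 : ZMod b,
    if n1 + n2 = k then rootCoeff b R n1 n2 * f n1 * g n2 else 0

/-- The basis element `e_n`. -/
noncomputable def rootBasis (b : ℕ) [NeZero b] (R : Type*) [CommRing R] (n : ZMod b) :
    ZMod b → Polynomial R :=
  fun k => if k = n then 1 else 0


lemma val_add_cases (b : ℕ) [NeZero b] (x y : ZMod b) :
    ((x+y).val = x.val + y.val ∧ x.val + y.val < b) ∨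
    ((x+y).val = x.val + y.val - b ∧ b ≤ x.val + y.val) := by
  have hx := ZMod.val_lt x
  have hy := ZMod.val_lt y
  have h := ZMod.val_add x y
  rcases lt_or_ge (x.val + y.val) b with hlt | hge
  · left; exact ⟨by rw [h, Nat.mod_eq_of_lt hlt], hlt⟩
  · right
    refine ⟨?_, hge⟩
    rw [h, Nat.mod_eq_sub_mod hge, Nat.mod_eq_of_lt (by omega)]

lemma cocycle (b : ℕ) [NeZero b] (R : Type*) [CommRing R] (n1 n2 n3 : ZMod b) :
    rootCoeff b R n1 n2 * rootCoeff b R (n1+n2) n3 =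
    rootCoeff b R n2 n3 * rootCoeff b R n1 (n2+n3) := by
  have h1 := ZMod.val_lt n1
  have h2 := ZMod.val_lt n2
  have h3 := ZMod.val_lt n3
  have ha := val_add_cases b n1 n2
  have hb := val_add_cases b n2 n3
  unfold rootCoeff
  rcases ha with ⟨ha1, ha2⟩ | ⟨ha1, ha2⟩ <;> rcases hb with ⟨hb1, hb2⟩ | ⟨hb1, hb2⟩ <;>
    split_ifs <;> try ring1
  all_goals (exfalso; omega)

lemma rootCoeff_comm (b : ℕ) [NeZero b] (R : Type*) [CommRing R] (x y : ZMod b) :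
    rootCoeff b R x y = rootCoeff b R y x := by
  unfold rootCoeff
  by_cases h : 0 < x.val ∧ 0 < y.val ∧ x.val + y.val ≤ b
  · rw [if_pos h, if_pos (by omega)]
  · rw [if_neg h, if_neg (by omega)]

lemma rootStar_apply (b : ℕ) [NeZero b] (R : Type*) [CommRing R]
    (f g : ZMod b → Polynomial R) (k : ZMod b) :
    rootStar b R f g k = ∑ n2 : ZMod b, rootCoeff b R (k - n2) n2 * f (k - n2) * g n2 := by
  unfold rootStar
  rw [Finset.sum_comm]
  refine Finset.sum_congr rfl fun n2 _ => ?_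
  have hcond : ∀ n1 : ZMod b, (n1 + n2 = k) = (n1 = k - n2) := fun n1 =>
    propext ⟨fun h => eq_sub_of_add_eq h, fun h => by rw [h]; ring⟩
  simp only [hcond]
  rw [Finset.sum_ite_eq' Finset.univ (k - n2)]
  simp

/-- the stringy product on the free `R[t]`-module with basis
`e₀, …, e_{b-1}` is `R[t]`-bilinear, commutative, associative, has unit `e₀`,
and is given on basis elements by the stated formula. -/
theorem stmt_9 (b : ℕ) [NeZero b] (R : Type*) [CommRing R] :
    (∀ n1 n2 : ZMod b, rootStar b R (rootBasis b R n1) (rootBasis b R n2) =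
      rootCoeff b R n1 n2 • rootBasis b R (n1 + n2)) ∧
    (∀ f g, rootStar b R f g = rootStar b R g f) ∧
    (∀ f g h, rootStar b R (rootStar b R f g) h = rootStar b R f (rootStar b R g h)) ∧
    (∀ f, rootStar b R (rootBasis b R 0) f = f) ∧
    (∀ (p : Polynomial R) (f g), rootStar b R (p • f) g = p • rootStar b R f g) ∧
    (∀ f g1 g2, rootStar b R f (g1 + g2) = rootStar b R f g1 + rootStar b R f g2) ∧
    (∀ f1 f2 g, rootStar b R (f1 + f2) g = rootStar b R f1 g + rootStar b R f2 g) := by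
  refine ⟨?_, ?_, ?_, ?_, ?_, ?_, ?_⟩
  · -- basis product
    intro n1 n2
    funext k
    rw [rootStar_apply]
    rw [Finset.sum_eq_single n2]
    · simp only [rootBasis, Pi.smul_apply, smul_eq_mul]
      by_cases hk : k = n1 + n2
      · subst hk
        rw [show n1 + n2 - n2 = n1 from by ring]
        simp
      · have h1 : ¬ (k - n2 = n1) := fun h => hk (by rw [← h]; ring)
        simp [h1, hk]
    · intro n2' _ h
      simp [rootBasis, h]
    · intro h; exact absurd (Finset.mem_univ n2) h
  · -- commutativity
    intro f g
    funext k
    rw [rootStar_apply, rootStar_apply]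
    refine Fintype.sum_equiv (Equiv.subLeft k) _ _ fun n2 => ?_
    simp only [Equiv.subLeft_apply]
    rw [show k - (k - n2) = n2 from by ring, rootCoeff_comm]
    ring
  · -- associativity
    intro f g h
    funext k
    rw [rootStar_apply, rootStar_apply]
    simp only [rootStar_apply, Finset.mul_sum, Finset.sum_mul]
    conv_rhs => rw [Finset.sum_comm]
    refine Finset.sum_congr rfl fun a _ => ?_
    refine Fintype.sum_equiv (Equiv.addRight a) _ _ fun n2 => ?_
    simp only [Equiv.coe_addRight]
    rw [show n2 + a - a = n2 from by ring,
        show k - a - n2 = k - (n2 + a) from by ring,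
        show k - a = (k - (n2 + a)) + n2 from by ring]
    have hc := cocycle b R (k - (n2 + a)) n2 a
    linear_combination (f (k - (n2 + a)) * g n2 * h a) * hc
  · -- unit
    intro f
    funext k
    rw [rootStar_apply]
    rw [Finset.sum_eq_single k]
    · rw [sub_self]
      simp [rootBasis, rootCoeff, ZMod.val_zero]
    · intro n2 _ h
      have : ¬ (k - n2 = 0) := fun h' => h (sub_eq_zero.mp h').symm
      simp [rootBasis, this]
    · intro h; exact absurd (Finset.mem_univ k) h
  · -- scalar
    intro p f g
    funext k
    simp only [rootStar, Pi.smul_apply, smul_eq_mul, Finset.mul_sum]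
    refine Finset.sum_congr rfl fun n1 _ => Finset.sum_congr rfl fun n2 _ => ?_
    split_ifs
    · ring
    · rw [mul_zero]
  · -- right additivity
    intro f g1 g2
    funext k
    simp only [rootStar, Pi.add_apply, ← Finset.sum_add_distrib]
    refine Finset.sum_congr rfl fun n1 _ => Finset.sum_congr rfl fun n2 _ => ?_
    split_ifs
    · ring
    · rw [add_zero]
  · -- left additivity
    intro f1 f2 g
    funext k
    simp only [rootStar, Pi.add_apply, ← Finset.sum_add_distrib]
    refine Finset.sum_congr rfl fun n1 _ => Finset.sum_congr rfl fun n2 _ => ?_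
    split_ifs
    · ring
    · rw [add_zero]
end
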